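/- arXiv:1907.10205 — 2 statements merged into one kernel-verified Lean document; each statement's English description precedes it below -/
import Mathlib

section
/- Let ℍ = {z ∈ ℂ : Im z ≥ 0} be the closed upper half-plane with the subspace topology, let S ⊆ ℍ be open in ℍ, and let S_i ⊆ S be an exhausting sequence of open subsets (i.e., every compact subset of S is contained in S_i for all sufficiently large i). Let X be a compact metric space, let u_i : S_i → X be continuous maps, and let u_∞ : S ∩ {z : Im z > 0} → X be a continuous map such that for every compact subset K of S ∩ {z : Im z > 0}, the maps u_i converge to u_∞ uniformly on K (this makes sense since K ⊆ S_i for all large i). Assume moreover that for every z ∈ S with Im z = 0 one has lim_{r→0} limsup_{i→∞} diam(u_i(B_r(z) ∩ S_i)) = 0, where B_r(z) is the open disk of radius r about z and diam denotes the diameter in X. Then u_∞ extends to a continuous map ū : S → X, and u_i converges to ū uniformly on every compact subset of S. -/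
/-!
Say that `u_i` has vanishing oscillation at `z ∈ S` if for every `ε` it eventually oscillates by
less than `ε` on some neighbourhood of `z`. This holds at interior points because `u_i → u_∞`
uniformly on a compact neighbourhood and `u_∞` is continuous there; at boundary points it is the
diameter hypothesis.
Near such a point `z` there are interior points `p` (they are dense in `S`), and `u_i z` stays
close to `u_i p → u_∞ p`, so `(u_i z)` is Cauchy; let `ū z` be its limit in the complete space
`X`. The same estimate makes `u_i` eventually uniformly close to `ū z` near `z`, which gives the
continuity of `ū` and, covering a compact set by finitely many such neighbourhoods, uniform
convergence on compact subsets of `S`.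
-/

open Filter Topology Set Metric

/-- `lim_{N → z} limsup_{i → l} diam (u_i (N ∩ s_i)) = 0`, with `N` running over
neighbourhoods of `z`. -/
def HasVanishingOscillationAt {ι α X : Type*} [TopologicalSpace α] [PseudoMetricSpace X]
    (u : ι → α → X) (s : ι → Set α) (l : Filter ι) (z : α) : Prop :=
  ∀ ε > 0, ∃ N ∈ 𝓝 z, ∀ᶠ i in l, ∀ x ∈ N ∩ s i, ∀ y ∈ N ∩ s i, dist (u i x) (u i y) < ε

namespace HasVanishingOscillationAt

variable {ι α X : Type*} [TopologicalSpace α] [PseudoMetricSpace X] {l : Filter ι}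
  {u : ι → α → X} {s : ι → Set α} {z : α}

theorem of_tendstoUniformlyOn {f : α → X} {N : Set α} (hN : N ∈ 𝓝 z)
    (hu : TendstoUniformlyOn u f l N) (hf : ContinuousAt f z) :
    HasVanishingOscillationAt u s l z := by
  intro ε hε
  have hfz : ∀ᶠ x in 𝓝 z, dist (f x) (f z) < ε / 4 := tendsto_nhds.1 hf _ (by positivity)
  refine ⟨N ∩ {x | dist (f x) (f z) < ε / 4}, inter_mem hN hfz, ?_⟩
  filter_upwards [tendstoUniformlyOn_iff.1 hu _ (by positivity : ε / 4 > 0)] with i hi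
  intro x hx y hy
  have hx' : dist (f x) (f z) < ε / 4 := hx.1.2
  have hy' : dist (f y) (f z) < ε / 4 := hy.1.2
  calc dist (u i x) (u i y) ≤ dist (u i x) (f x) + dist (f x) (f z) + dist (f z) (u i y) :=
        dist_triangle4 _ _ _ _
    _ ≤ dist (f x) (u i x) + dist (f x) (f z) + (dist (f y) (f z) + dist (f y) (u i y)) := by
        rw [dist_comm (u i x)]; gcongr; exact dist_triangle_left _ _ _
    _ < ε / 4 + ε / 4 + (ε / 4 + ε / 4) := by gcongr; exacts [hi x hx.1.1, hi y hy.1.1]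
    _ = ε := by ring

theorem eventually_dist_lt (hosc : HasVanishingOscillationAt u s l z)
    (hz : ∀ᶠ i in l, z ∈ s i) {c : X} (hc : Tendsto (fun i => u i z) l (𝓝 c)) :
    ∀ ε > 0, ∃ N ∈ 𝓝 z, ∀ᶠ i in l, ∀ x ∈ N ∩ s i, dist (u i x) c < ε := by
  intro ε hε
  obtain ⟨N, hN, hosc⟩ := hosc (ε / 2) (by positivity)
  refine ⟨N, hN, ?_⟩
  filter_upwards [hosc, hz, tendsto_nhds.1 hc _ (by positivity : ε / 2 > 0)]
    with i hi hzi hci x hx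
  calc dist (u i x) c ≤ dist (u i x) (u i z) + dist (u i z) c := dist_triangle _ _ _
    _ < ε / 2 + ε / 2 := add_lt_add (hi x hx z ⟨mem_of_mem_nhds hN, hzi⟩) hci
    _ = ε := by ring

theorem cauchy_map [l.NeBot] (hosc : HasVanishingOscillationAt u s l z)
    (hz : ∀ᶠ i in l, z ∈ s i) {D : Set α} (hzD : z ∈ closure D) (hDs : ∀ p ∈ D, ∀ᶠ i in l, p ∈ s i)
    {f : α → X} (hD : ∀ p ∈ D, Tendsto (fun i => u i p) l (𝓝 (f p))) :
    Cauchy (map (fun i => u i z) l) := by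
  refine Metric.cauchy_iff.2 ⟨map_neBot, fun ε hε => ?_⟩
  obtain ⟨N, hN, hosc⟩ := hosc (ε / 4) (by positivity)
  obtain ⟨p, hpN, hpD⟩ := mem_closure_iff_nhds.1 hzD N hN
  have hnear : ∀ᶠ i in l, dist (u i z) (f p) < ε / 2 := by
    filter_upwards [hosc, hz, hDs p hpD, tendsto_nhds.1 (hD p hpD) _ (by positivity : ε / 4 > 0)]
      with i hi hzi hpi hfp
    calc dist (u i z) (f p) ≤ dist (u i z) (u i p) + dist (u i p) (f p) := dist_triangle _ _ _
      _ < ε / 4 + ε / 4 := add_lt_add (hi z ⟨mem_of_mem_nhds hN, hzi⟩ p ⟨hpN, hpi⟩) hfp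
      _ = ε / 2 := by ring
  refine ⟨ball (f p) (ε / 2), hnear, fun x hx y hy => ?_⟩
  linarith [dist_triangle_right x y (f p), mem_ball.1 hx, mem_ball.1 hy]

end HasVanishingOscillationAt

theorem HasVanishingOscillationAt.of_diam {ι α X : Type*} [PseudoMetricSpace α]
    [PseudoMetricSpace X] [CompactSpace X] {l : Filter ι} {u : ι → α → X} {s : ι → Set α} {z : α}
    (h : ∀ ε > 0, ∃ r > 0, ∀ᶠ i in l, diam (u i '' (ball z r ∩ s i)) < ε) :
    HasVanishingOscillationAt u s l z := by
  intro ε hε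
  obtain ⟨r, hr, hdiam⟩ := h ε hε
  refine ⟨ball z r, ball_mem_nhds z hr, ?_⟩
  filter_upwards [hdiam] with i hi x hx y hy
  exact (dist_le_diam_of_mem isBounded_of_compactSpace (mem_image_of_mem _ hx)
    (mem_image_of_mem _ hy)).trans_lt hi

section

variable {ι α X : Type*} [TopologicalSpace α] [MetricSpace X] {l : Filter ι}
  {u : ι → α → X} {s : ι → Set α} {S : Set α} {g : α → X}

theorem continuousOn_of_hasVanishingOscillationAt [l.NeBot]
    (hosc : ∀ z ∈ S, HasVanishingOscillationAt u s l z) (hs : ∀ z ∈ S, ∀ᶠ i in l, z ∈ s i)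
    (hg : ∀ z ∈ S, Tendsto (fun i => u i z) l (𝓝 (g z))) : ContinuousOn g S := by
  refine fun z hz => Metric.tendsto_nhds.2 fun ε hε => ?_
  obtain ⟨N, hN, hNε⟩ := (hosc z hz).eventually_dist_lt (hs z hz) (hg z hz) (ε / 2) (by positivity)
  filter_upwards [inter_mem_nhdsWithin S hN] with x ⟨hxS, hxN⟩
  have : dist (g x) (g z) ≤ ε / 2 := le_of_tendsto ((hg x hxS).dist tendsto_const_nhds) <|
    (hNε.and (hs x hxS)).mono fun i hi => (hi.1 x ⟨hxN, hi.2⟩).le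
  linarith

theorem tendstoUniformlyOn_of_hasVanishingOscillationAt [l.NeBot]
    (hosc : ∀ z ∈ S, HasVanishingOscillationAt u s l z) (hs : ∀ z ∈ S, ∀ᶠ i in l, z ∈ s i)
    (hg : ∀ z ∈ S, Tendsto (fun i => u i z) l (𝓝 (g z))) {K : Set α} (hK : IsCompact K)
    (hKS : K ⊆ S) (hKs : ∀ᶠ i in l, K ⊆ s i) : TendstoUniformlyOn u g l K := by
  refine (tendstoLocallyUniformlyOn_iff_tendstoUniformlyOn_of_compact hK).1 <|
    tendstoLocallyUniformlyOn_iff.2 fun ε hε z hz => ?_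
  obtain ⟨N, hN, hNε⟩ :=
    (hosc z (hKS hz)).eventually_dist_lt (hs z (hKS hz)) (hg z (hKS hz)) (ε / 2) (by positivity)
  refine ⟨K ∩ N, inter_mem_nhdsWithin K hN, ?_⟩
  filter_upwards [hNε, hKs] with i hi hKi y ⟨hyK, hyN⟩
  have hgy : dist (g y) (g z) ≤ ε / 2 :=
    le_of_tendsto ((hg y (hKS hyK)).dist tendsto_const_nhds) <|
      (hNε.and (hs y (hKS hyK))).mono fun j hj => (hj.1 y ⟨hyN, hj.2⟩).le
  linarith [dist_triangle_right (g y) (u i y) (g z), hi y ⟨hyN, hKi hyK⟩]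

theorem exists_continuousOn_tendstoUniformlyOn_of_hasVanishingOscillationAt [Nonempty X]
    [CompleteSpace X] [l.NeBot] (hosc : ∀ z ∈ S, HasVanishingOscillationAt u s l z)
    (hexh : ∀ K ⊆ S, IsCompact K → ∀ᶠ i in l, K ⊆ s i) {D : Set α} (hDS : D ⊆ S)
    (hSD : S ⊆ closure D) {f : α → X} (hD : ∀ p ∈ D, Tendsto (fun i => u i p) l (𝓝 (f p))) :
    ∃ g : α → X, ContinuousOn g S ∧ EqOn g f D ∧
      ∀ K ⊆ S, IsCompact K → TendstoUniformlyOn u g l K := by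
  have hs : ∀ z ∈ S, ∀ᶠ i in l, z ∈ s i := fun z hz =>
    (hexh {z} (singleton_subset_iff.2 hz) isCompact_singleton).mono fun _ => singleton_subset_iff.1
  have hg : ∀ z ∈ S, Tendsto (fun i => u i z) l (𝓝 (limUnder l fun i => u i z)) := fun z hz =>
    tendsto_nhds_limUnder <| CompleteSpace.complete <|
      (hosc z hz).cauchy_map (hs z hz) (hSD hz) (fun p hp => hs p (hDS hp)) hD
  exact ⟨_, continuousOn_of_hasVanishingOscillationAt hosc hs hg,
    fun p hp => tendsto_nhds_unique (hg p (hDS hp)) (hD p hp),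
    fun K hKS hK =>
      tendstoUniformlyOn_of_hasVanishingOscillationAt hosc hs hg hK hKS (hexh K hKS hK)⟩

end

theorem Complex.inter_setOf_nonneg_im_subset_closure {V : Set ℂ} (hV : IsOpen V) :
    V ∩ {z | 0 ≤ z.im} ⊆ closure (V ∩ {z | 0 < z.im}) := by
  simpa only [closure_setOfPred_lt_im] using hV.inter_closure (t := {z : ℂ | 0 < z.im})

theorem boundary_extension_convergence_general {X : Type*} [MetricSpace X] [CompactSpace X]
    (S : Set ℂ)
    (hSopen : ∃ V : Set ℂ, IsOpen V ∧ S = V ∩ {z : ℂ | 0 ≤ z.im})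
    (Si : ℕ → Set ℂ)
    (hexh : ∀ K : Set ℂ, K ⊆ S → IsCompact K → ∀ᶠ i in atTop, K ⊆ Si i)
    (u : ℕ → ℂ → X)
    (uinf : ℂ → X) (huinf : ContinuousOn uinf (S ∩ {z : ℂ | 0 < z.im}))
    (hconv : ∀ K : Set ℂ, K ⊆ S ∩ {z : ℂ | 0 < z.im} → IsCompact K →
      TendstoUniformlyOn (fun i => u i) uinf atTop K)
    (hbdry : ∀ z ∈ S, z.im = 0 → ∀ ε > 0, ∃ r > 0, ∀ᶠ i in atTop,
      Metric.diam (u i '' (Metric.ball z r ∩ Si i)) < ε) :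
    ∃ ubar : ℂ → X, ContinuousOn ubar S ∧
      (∀ z ∈ S ∩ {z : ℂ | 0 < z.im}, ubar z = uinf z) ∧
      (∀ K : Set ℂ, K ⊆ S → IsCompact K →
        TendstoUniformlyOn (fun i => u i) ubar atTop K) := by
  have : Nonempty X := ⟨u 0 0⟩
  obtain ⟨V, hV, rfl⟩ := hSopen
  have hD : V ∩ {z | 0 ≤ z.im} ∩ {z | 0 < z.im} = V ∩ {z | 0 < z.im} := by
    ext z
    simp only [mem_inter_iff, mem_ofPred_eq]
    exact ⟨fun ⟨⟨hzV, _⟩, hz⟩ => ⟨hzV, hz⟩, fun ⟨hzV, hz⟩ => ⟨⟨hzV, hz.le⟩, hz⟩⟩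
  have hDopen : IsOpen (V ∩ {z | 0 < z.im}) :=
    hV.inter (isOpen_lt continuous_const Complex.continuous_im)
  have hosc : ∀ z ∈ V ∩ {z | 0 ≤ z.im}, HasVanishingOscillationAt u Si atTop z := by
    rintro z ⟨hzV, hz : 0 ≤ z.im⟩
    rcases hz.eq_or_lt with hz0 | hz0
    · exact .of_diam (hbdry z ⟨hzV, hz⟩ hz0.symm)
    · have hzD := hD ▸ hDopen.mem_nhds ⟨hzV, hz0⟩
      obtain ⟨K, hK, hKD, hKc⟩ := local_compact_nhds hzD
      exact .of_tendstoUniformlyOn hK (hconv K hKD hKc) (huinf.continuousAt hzD)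
  simpa only [EqOn] using exists_continuousOn_tendstoUniformlyOn_of_hasVanishingOscillationAt hosc
    hexh inter_subset_left (hD ▸ Complex.inter_setOf_nonneg_im_subset_closure hV)
    fun p hp => (hconv {p} (singleton_subset_iff.2 hp) isCompact_singleton).tendsto_at rfl

/-- Boundary extension and convergence (from the proof of Proposition 2.6(b)):
continuous maps on an exhausting sequence of open subsets of an open subset `S` of the
closed upper half-plane, converging uniformly on compact subsets of the interior part of
`S` and with vanishing boundary diameters, converge uniformly on compact subsets of `S`
to a continuous extension of the interior limit. -/
theorem boundary_extension_convergence {X : Type*} [MetricSpace X] [CompactSpace X]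
    (S : Set ℂ) (hSsub : S ⊆ {z : ℂ | 0 ≤ z.im})
    (hSopen : ∃ V : Set ℂ, IsOpen V ∧ S = V ∩ {z : ℂ | 0 ≤ z.im})
    (Si : ℕ → Set ℂ) (hSisub : ∀ i, Si i ⊆ S)
    (hSiopen : ∀ i, ∃ V : Set ℂ, IsOpen V ∧ Si i = V ∩ {z : ℂ | 0 ≤ z.im})
    (hexh : ∀ K : Set ℂ, K ⊆ S → IsCompact K → ∀ᶠ i in atTop, K ⊆ Si i)
    (u : ℕ → ℂ → X) (hu : ∀ i, ContinuousOn (u i) (Si i))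
    (uinf : ℂ → X) (huinf : ContinuousOn uinf (S ∩ {z : ℂ | 0 < z.im}))
    (hconv : ∀ K : Set ℂ, K ⊆ S ∩ {z : ℂ | 0 < z.im} → IsCompact K →
      TendstoUniformlyOn (fun i => u i) uinf atTop K)
    (hbdry : ∀ z ∈ S, z.im = 0 → ∀ ε > 0, ∃ r > 0, ∀ᶠ i in atTop,
      Metric.diam (u i '' (Metric.ball z r ∩ Si i)) < ε) :
    ∃ ubar : ℂ → X, ContinuousOn ubar S ∧
      (∀ z ∈ S ∩ {z : ℂ | 0 < z.im}, ubar z = uinf z) ∧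
      (∀ K : Set ℂ, K ⊆ S → IsCompact K →
        TendstoUniformlyOn (fun i => u i) ubar atTop K) :=
  boundary_extension_convergence_general S hSopen Si hexh u uinf huinf hconv hbdry
end

section
/- Let X be a Hausdorff topological space, let S ⊆ X be a subset containing at most two elements, and let f : [0, ∞) → X be a continuous map. Suppose that for every sequence (t_n) of nonnegative real numbers with t_n → +∞ there exist a strictly increasing sequence of indices (n_k) and a point x ∈ S such that f(t_{n_k}) → x as k → ∞. Then there exists x ∈ S such that f(t) → x as t → +∞. -/
open Filter

/-- Uniqueness of the asymptotic limit (from the proof of Theorem 4.9 and Lemma 5.7):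
a continuous path in a Hausdorff space, all of whose subsequential limits at infinity
lie in a fixed set with at most two points, converges at infinity to a point of this
set. -/
theorem asymptotic_limit_unique {X : Type*} [TopologicalSpace X] [T2Space X]
    (S : Set X) (hS : ∃ a b : X, S ⊆ {a, b})
    (f : ℝ → X) (hf : ContinuousOn f (Set.Ici (0 : ℝ)))
    (hsub : ∀ t : ℕ → ℝ, (∀ n, 0 ≤ t n) → Tendsto t atTop atTop →
      ∃ φ : ℕ → ℕ, StrictMono φ ∧ ∃ x ∈ S,
        Tendsto (fun k => f (t (φ k))) atTop (nhds x)) :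
    ∃ x ∈ S, Tendsto f atTop (nhds x) := by
  by_contra hcon
  push_neg at hcon
  -- S is nonempty
  obtain ⟨φ0, -, x₀, hx₀S, -⟩ := hsub (fun n => (n : ℝ)) (fun n => Nat.cast_nonneg n)
    tendsto_natCast_atTop_atTop
  -- every point of S has an open neighborhood which f frequently escapes
  have hesc : ∀ x ∈ S, ∃ U : Set X, IsOpen U ∧ x ∈ U ∧ ∃ᶠ t in atTop, f t ∉ U := by
    intro x hx
    have hnt := hcon x hx
    have hUe : ∃ U ∈ nhds x, ∃ᶠ t in atTop, f t ∉ U := by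
      by_contra hc
      push_neg at hc
      apply hnt
      rw [Filter.tendsto_def]
      intro s hs
      have := hc s hs
      simpa [Filter.Eventually] using this
    obtain ⟨U, hU, hfreq⟩ := hUe
    obtain ⟨O, hOU, hOopen, hxO⟩ := mem_nhds_iff.mp hU
    exact ⟨O, hOopen, hxO, hfreq.mono fun t ht hmem => ht (hOU hmem)⟩
  by_cases hsing : ∀ y ∈ S, y = x₀
  · -- single-point case
    obtain ⟨U, hUo, hxU, hfreq⟩ := hesc x₀ hx₀S
    have hfr := frequently_atTop.mp hfreq
    choose τ hτge hτ using fun n : ℕ => hfr (max (n : ℝ) 0)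
    have hnn : ∀ n, 0 ≤ τ n := fun n => le_trans (le_max_right _ _) (hτge n)
    have hten : Tendsto τ atTop atTop :=
      tendsto_atTop_mono (fun n => le_trans (le_max_left _ _) (hτge n))
        tendsto_natCast_atTop_atTop
    obtain ⟨φ, hφ, x, hxS, hlim⟩ := hsub τ hnn hten
    rw [hsing x hxS] at hlim
    have hev : ∀ᶠ k in atTop, f (τ (φ k)) ∈ U := hlim (hUo.mem_nhds hxU)
    obtain ⟨k, hk⟩ := hev.exists
    exact hτ (φ k) hk
  · push_neg at hsing
    obtain ⟨y, hyS, hyne⟩ := hsing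
    obtain ⟨a0, b0, hab⟩ := hS
    have hSsub : ∀ z ∈ S, z = x₀ ∨ z = y := by
      intro z hz
      have h1 := hab hz; have h2 := hab hx₀S; have h3 := hab hyS
      simp only [Set.mem_insert_iff, Set.mem_singleton_iff] at h1 h2 h3
      rcases h1 with h | h <;> rcases h2 with h2 | h2 <;> rcases h3 with h3 | h3 <;> simp_all
    obtain ⟨U, hUo, haU, hfrU⟩ := hesc x₀ hx₀S
    obtain ⟨V, hVo, hbV, hfrV⟩ := hesc y hyS
    obtain ⟨Va, Vb, hVao, hVbo, haVa, hbVb, hdisj⟩ := t2_separation hyne.symm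
    set U' := U ∩ Va with hU'def
    set V' := V ∩ Vb with hV'def
    have hU'o : IsOpen U' := hUo.inter hVao
    have hV'o : IsOpen V' := hVo.inter hVbo
    have haU' : x₀ ∈ U' := ⟨haU, haVa⟩
    have hbV' : y ∈ V' := ⟨hbV, hbVb⟩
    have hfrU' : ∃ᶠ t in atTop, f t ∉ U' := hfrU.mono fun t ht hm => ht hm.1
    have hfrV' : ∃ᶠ t in atTop, f t ∉ V' := hfrV.mono fun t ht hm => ht hm.1
    have key : ∀ n : ℕ, ∃ τ : ℝ, (n : ℝ) ≤ τ ∧ 0 ≤ τ ∧ f τ ∉ U' ∧ f τ ∉ V' := by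
      intro n
      obtain ⟨s, hs, hfs⟩ := frequently_atTop.mp hfrU' (max (n : ℝ) 0)
      obtain ⟨r, hr, hfr2⟩ := frequently_atTop.mp hfrV' s
      have hs0 : 0 ≤ s := le_trans (le_max_right _ _) hs
      have hsn : (n : ℝ) ≤ s := le_trans (le_max_left _ _) hs
      have hI : ∃ τ ∈ Set.Icc s r, f τ ∉ U' ∧ f τ ∉ V' := by
        by_cases h1 : f s ∈ V'
        · by_cases h2 : f r ∈ U'
          · by_contra hno
            push_neg at hno
            have hcover : f '' Set.Icc s r ⊆ U' ∪ V' := by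
              rintro _ ⟨τ, hτ, rfl⟩
              by_cases h : f τ ∈ U'
              · exact Or.inl h
              · exact Or.inr (hno τ hτ h)
            have hpc : IsPreconnected (f '' Set.Icc s r) :=
              isPreconnected_Icc.image f (hf.mono fun t ht => le_trans hs0 ht.1)
            obtain ⟨z, -, hzUV⟩ := hpc U' V' hU'o hV'o hcover
              ⟨f r, ⟨r, ⟨hr, le_refl r⟩, rfl⟩, h2⟩
              ⟨f s, ⟨s, ⟨le_refl s, hr⟩, rfl⟩, h1⟩
            exact Set.disjoint_left.mp hdisj hzUV.1.2 hzUV.2.2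
          · exact ⟨r, ⟨hr, le_refl r⟩, h2, hfr2⟩
        · exact ⟨s, ⟨le_refl s, hr⟩, hfs, h1⟩
      obtain ⟨τ, hτmem, hτ1, hτ2⟩ := hI
      exact ⟨τ, le_trans hsn hτmem.1, le_trans hs0 hτmem.1, hτ1, hτ2⟩
    choose τ hτn hτ0 hτU hτV using key
    have hten : Tendsto τ atTop atTop :=
      tendsto_atTop_mono hτn tendsto_natCast_atTop_atTop
    obtain ⟨φ, hφ, x, hxS, hlim⟩ := hsub τ hτ0 hten
    rcases hSsub x hxS with rfl | rfl
    · have hev : ∀ᶠ k in atTop, f (τ (φ k)) ∈ U' := hlim (hU'o.mem_nhds haU')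
      obtain ⟨k, hk⟩ := hev.exists
      exact hτU (φ k) hk
    · have hev : ∀ᶠ k in atTop, f (τ (φ k)) ∈ V' := hlim (hV'o.mem_nhds hbV')
      obtain ⟨k, hk⟩ := hev.exists
      exact hτV (φ k) hk
end
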